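/- arXiv:1201.6634 — 3 statements merged into one kernel-verified Lean document; each statement's English description precedes it below -/
import Mathlib

section
/- Let ξ₁, …, ξ_k be independent ℝ^d-valued random variables, where ξ_j has the multivariate Gaussian distribution with mean vector μ_j ∈ ℝ^d and common positive definite covariance matrix Σ. Set Ξ = ξ₁ξ₁ᵀ + ⋯ + ξ_kξ_kᵀ, ω = μ₁μ₁ᵀ + ⋯ + μ_kμ_kᵀ and σ = 2Σ. Then for every positive semidefinite real symmetric d×d matrix u, E[exp(-tr(u Ξ))] = det(I + σu)^{-k/2} · exp(-tr(u (I + σu)^{-1} ω)). -/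
/-!
Since `tr (u ξ ξᵀ) = ξᵀ u ξ`, the integrand is a product over `j`, and independence turns the
expectation into the product of the `k` Laplace transforms `E exp (-ξⱼᵀ u ξⱼ)`. For a single
vector, the Gaussian density times `exp (-xᵀ u x)` is a Gaussian kernel with precision matrix
`B = Σ⁻¹ + 2u`; completing the square evaluates its integral, and the identities
`1 + 2Σu = Σ B` and `Σ⁻¹ B⁻¹ Σ⁻¹ = Σ⁻¹ - 2u (1 + 2Σu)⁻¹` put the result in the stated form.
-/

open MeasureTheory ProbabilityTheory Matrix

/-- The multivariate Gaussian distribution on `ℝ^d` with mean vector `m` and (positive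
definite) covariance matrix `S`, given by its Lebesgue density
`(2π)^(-d/2) (det S)^(-1/2) exp (-(x-m)ᵀ S⁻¹ (x-m) / 2)`. -/
noncomputable def mvGaussian {d : ℕ} (m : Fin d → ℝ) (S : Matrix (Fin d) (Fin d) ℝ) :
    Measure (Fin d → ℝ) :=
  volume.withDensity fun x => ENNReal.ofReal
    ((2 * Real.pi) ^ (-(d : ℝ) / 2) * S.det ^ (-(1 : ℝ) / 2) *
      Real.exp (-((x - m) ⬝ᵥ (S⁻¹ *ᵥ (x - m))) / 2))

open Real

section

variable {ι : Type*} [Fintype ι]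

theorem Matrix.trace_mul_vecMulVec {R : Type*} [CommSemiring R] (M : Matrix ι ι R) (v w : ι → R) :
    (M * vecMulVec v w).trace = w ⬝ᵥ M *ᵥ v := by
  rw [mul_vecMulVec, trace_vecMulVec, dotProduct_comm]

theorem Matrix.IsSymm.add_dotProduct_mulVec_add {R : Type*} [CommRing R] {Q : Matrix ι ι R}
    (hQ : Q.IsSymm) (x y : ι → R) :
    (x + y) ⬝ᵥ Q *ᵥ (x + y) = x ⬝ᵥ Q *ᵥ x + 2 * (Q *ᵥ y) ⬝ᵥ x + y ⬝ᵥ Q *ᵥ y := by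
  have hyx : y ⬝ᵥ Q *ᵥ x = (Q *ᵥ y) ⬝ᵥ x := by
    rw [dotProduct_mulVec, ← vecMul_transpose, hQ.eq]
  rw [mulVec_add, dotProduct_add, add_dotProduct, add_dotProduct, hyx, dotProduct_comm x (Q *ᵥ y)]
  ring

theorem Matrix.IsSymm.sub_dotProduct_mulVec_sub {R : Type*} [CommRing R] {Q : Matrix ι ι R}
    (hQ : Q.IsSymm) (x y : ι → R) :
    (x - y) ⬝ᵥ Q *ᵥ (x - y) = x ⬝ᵥ Q *ᵥ x - 2 * (Q *ᵥ y) ⬝ᵥ x + y ⬝ᵥ Q *ᵥ y := by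
  rw [sub_eq_add_neg, hQ.add_dotProduct_mulVec_add, mulVec_neg, neg_dotProduct, neg_dotProduct,
    dotProduct_neg, neg_neg]
  ring

theorem integral_exp_neg_half_sum_sq :
    ∫ x : ι → ℝ, exp (-(∑ i, x i ^ 2) / 2) = (2 * π) ^ (Fintype.card ι / 2 : ℝ) := by
  have hprod (x : ι → ℝ) : exp (-(∑ i, x i ^ 2) / 2) = ∏ i, exp (-(1 / 2) * x i ^ 2) := by
    rw [← exp_sum, ← Finset.sum_neg_distrib, Finset.sum_div]
    congr 1
    exact Finset.sum_congr rfl fun i _ => by ring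
  simp_rw [hprod]
  rw [integral_fintype_prod_volume_eq_pow (fun t : ℝ => exp (-(1 / 2) * t ^ 2)), integral_gaussian,
    sqrt_eq_rpow, ← rpow_natCast, ← rpow_mul (by positivity)]
  congr 1 <;> ring

variable [DecidableEq ι]

theorem Matrix.one_add_smul_mul_eq_mul_inv_add {S : Matrix ι ι ℝ} (hS : IsUnit S.det) (c : ℝ)
    (u : Matrix ι ι ℝ) :
    1 + (c • S) * u = S * (S⁻¹ + c • u) := by
  rw [Matrix.mul_add, mul_nonsing_inv _ hS, mul_smul_comm, smul_mul_assoc]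

theorem Matrix.inv_mul_inv_add_smul_inv_mul_inv {S : Matrix ι ι ℝ} (hS : IsUnit S.det) {c : ℝ}
    {u : Matrix ι ι ℝ} (hB : IsUnit (S⁻¹ + c • u).det) :
    S⁻¹ * (S⁻¹ + c • u)⁻¹ * S⁻¹ = S⁻¹ - c • (u * (1 + (c • S) * u)⁻¹) := by
  rw [one_add_smul_mul_eq_mul_inv_add hS, mul_inv_rev]
  set B := S⁻¹ + c • u
  calc S⁻¹ * B⁻¹ * S⁻¹ = (B - c • u) * B⁻¹ * S⁻¹ := by rw [add_sub_cancel_right]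
    _ = S⁻¹ - c • (u * (B⁻¹ * S⁻¹)) := by
      rw [Matrix.sub_mul, mul_nonsing_inv _ hB, Matrix.sub_mul, Matrix.one_mul, smul_mul_assoc,
        smul_mul_assoc, Matrix.mul_assoc]

theorem Matrix.PosDef.det_one_add_smul_mul_pos {S u : Matrix ι ι ℝ} (hS : S.PosDef)
    (hu : u.PosSemidef) {c : ℝ} (hc : 0 ≤ c) : 0 < (1 + (c • S) * u).det := by
  rw [one_add_smul_mul_eq_mul_inv_add hS.det_pos.ne'.isUnit, det_mul]
  exact mul_pos hS.det_pos (hS.inv.add_posSemidef (hu.smul hc)).det_pos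

theorem integral_comp_mulVec {C : Matrix ι ι ℝ} (hC : C.det ≠ 0) (f : (ι → ℝ) → ℝ) :
    ∫ x, f (C *ᵥ x) = |C.det|⁻¹ * ∫ y, f y := by
  let e := ((toLin' C).equivOfDetNeZero (by rwa [LinearMap.det_toLin'])).toContinuousLinearEquiv
  have h := e.toHomeomorph.measurableEmbedding.integral_map (μ := volume) f
  have he : ⇑e.toHomeomorph = toLin' C := rfl
  rw [he, Real.map_matrix_volume_pi_eq_smul_volume_pi hC, integral_smul_measure] at h
  simp only [toLin'_apply] at h
  rw [← h, ENNReal.toReal_ofReal (abs_nonneg _), abs_inv, smul_eq_mul]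

open scoped MatrixOrder in
theorem integral_exp_neg_half_dotProduct_mulVec {B : Matrix ι ι ℝ} (hB : B.PosDef) :
    ∫ x : ι → ℝ, exp (-(x ⬝ᵥ B *ᵥ x) / 2) =
      (2 * π) ^ (Fintype.card ι / 2 : ℝ) * B.det ^ (-(1 : ℝ) / 2) := by
  set C := CFC.sqrt B
  have hCC : C * C = B := CFC.sqrt_mul_sqrt_self B hB.posSemidef.nonneg
  have hC : C.IsSymm := by simpa using (CFC.sqrt_nonneg B).posSemidef.1
  have hdet : C.det = √B.det := by simpa using PosSemidef.det_sqrt hB.posSemidef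
  have hquad (x : ι → ℝ) : x ⬝ᵥ B *ᵥ x = ∑ i, (C *ᵥ x) i ^ 2 := by
    rw [← hCC, ← mulVec_mulVec, dotProduct_mulVec, ← vecMul_transpose, hC.eq]
    simp [dotProduct, sq]
  simp_rw [hquad]
  rw [integral_comp_mulVec (f := fun y => exp (-(∑ i, y i ^ 2) / 2)), integral_exp_neg_half_sum_sq,
    hdet, abs_of_nonneg (sqrt_nonneg _), sqrt_eq_rpow, ← rpow_neg hB.det_pos.le, mul_comm]
  · ring_nf
  · rw [hdet]
    exact (sqrt_pos.2 hB.det_pos).ne'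

theorem integral_exp_neg_half_dotProduct_mulVec_add {B : Matrix ι ι ℝ} (hB : B.PosDef)
    (b : ι → ℝ) :
    ∫ x : ι → ℝ, exp (-(x ⬝ᵥ B *ᵥ x) / 2 + b ⬝ᵥ x) =
      (2 * π) ^ (Fintype.card ι / 2 : ℝ) * B.det ^ (-(1 : ℝ) / 2) *
        exp (b ⬝ᵥ B⁻¹ *ᵥ b / 2) := by
  have hBc : B *ᵥ (B⁻¹ *ᵥ b) = b := by
    rw [mulVec_mulVec, mul_nonsing_inv _ hB.det_pos.ne'.isUnit, one_mulVec]
  have hshift (x : ι → ℝ) :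
      -((x + B⁻¹ *ᵥ b) ⬝ᵥ B *ᵥ (x + B⁻¹ *ᵥ b)) / 2 + b ⬝ᵥ (x + B⁻¹ *ᵥ b) =
        -(x ⬝ᵥ B *ᵥ x) / 2 + b ⬝ᵥ B⁻¹ *ᵥ b / 2 := by
    rw [(isHermitian_iff_isSymm.1 hB.isHermitian).add_dotProduct_mulVec_add, hBc, dotProduct_add,
      dotProduct_comm (B⁻¹ *ᵥ b)]
    ring
  rw [← integral_add_right_eq_self _ (B⁻¹ *ᵥ b)]
  simp_rw [hshift, exp_add]
  rw [integral_mul_const, integral_exp_neg_half_dotProduct_mulVec hB]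

end

theorem integral_mvGaussian {d : ℕ} (m : Fin d → ℝ) {S : Matrix (Fin d) (Fin d) ℝ}
    (hS : S.PosDef) (f : (Fin d → ℝ) → ℝ) :
    ∫ x, f x ∂mvGaussian m S = (2 * π) ^ (-(d : ℝ) / 2) * S.det ^ (-(1 : ℝ) / 2) *
      ∫ x, exp (-((x - m) ⬝ᵥ (S⁻¹ *ᵥ (x - m))) / 2) * f x := by
  have hdetS := hS.det_pos
  rw [mvGaussian, integral_withDensity_eq_integral_toReal_smul (by fun_prop)
    (.of_forall fun _ => ENNReal.ofReal_lt_top), ← integral_const_mul]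
  congr 1 with x
  rw [ENNReal.toReal_ofReal (by positivity), smul_eq_mul, mul_assoc]

theorem integral_exp_neg_dotProduct_mulVec_mvGaussian {d : ℕ} (m : Fin d → ℝ)
    {S u : Matrix (Fin d) (Fin d) ℝ} (hS : S.PosDef) (hu : u.PosSemidef) :
    ∫ x, exp (-(x ⬝ᵥ u *ᵥ x)) ∂mvGaussian m S =
      (1 + (2 : ℝ) • S * u).det ^ (-(1 : ℝ) / 2) *
        exp (-(m ⬝ᵥ (u * (1 + (2 : ℝ) • S * u)⁻¹) *ᵥ m)) := by
  set B := S⁻¹ + (2 : ℝ) • u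
  have hB : B.PosDef := hS.inv.add_posSemidef (hu.smul (by norm_num))
  have hSinv : S⁻¹.IsSymm := isHermitian_iff_isSymm.1 hS.inv.isHermitian
  have hexp (x : Fin d → ℝ) :
      exp (-((x - m) ⬝ᵥ (S⁻¹ *ᵥ (x - m))) / 2) * exp (-(x ⬝ᵥ u *ᵥ x)) =
        exp (-(m ⬝ᵥ S⁻¹ *ᵥ m) / 2) * exp (-(x ⬝ᵥ B *ᵥ x) / 2 + (S⁻¹ *ᵥ m) ⬝ᵥ x) := by
    rw [← exp_add, ← exp_add, hSinv.sub_dotProduct_mulVec_sub, add_mulVec, smul_mulVec,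
      dotProduct_add, dotProduct_smul, smul_eq_mul]
    ring_nf
  have hquad : (S⁻¹ *ᵥ m) ⬝ᵥ B⁻¹ *ᵥ (S⁻¹ *ᵥ m) = m ⬝ᵥ (S⁻¹ * B⁻¹ * S⁻¹) *ᵥ m := by
    nth_rewrite 1 [← vecMul_transpose, hSinv.eq]
    rw [← dotProduct_mulVec, mulVec_mulVec, mulVec_mulVec, Matrix.mul_assoc]
  have hdet : (1 + (2 : ℝ) • S * u).det = S.det * B.det := by
    rw [one_add_smul_mul_eq_mul_inv_add hS.det_pos.ne'.isUnit, det_mul]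
  have hpow : (2 * π) ^ (-(d : ℝ) / 2) * (2 * π) ^ ((d : ℝ) / 2) = 1 := by
    rw [← rpow_add (by positivity), neg_div, neg_add_cancel, rpow_zero]
  have hmean : exp (-(m ⬝ᵥ S⁻¹ *ᵥ m) / 2) *
      exp (m ⬝ᵥ (S⁻¹ - (2 : ℝ) • (u * (1 + (2 : ℝ) • S * u)⁻¹)) *ᵥ m / 2) =
        exp (-(m ⬝ᵥ (u * (1 + (2 : ℝ) • S * u)⁻¹) *ᵥ m)) := by
    rw [← exp_add, sub_mulVec, dotProduct_sub, smul_mulVec, dotProduct_smul, smul_eq_mul]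
    ring_nf
  rw [integral_mvGaussian m hS]
  simp_rw [hexp]
  rw [integral_const_mul, integral_exp_neg_half_dotProduct_mulVec_add hB, Fintype.card_fin, hquad,
    inv_mul_inv_add_smul_inv_mul_inv hS.det_pos.ne'.isUnit hB.det_pos.ne'.isUnit, hdet,
    mul_rpow hS.det_pos.le hB.det_pos.le, ← hmean]
  calc _ = ((2 * π) ^ (-(d : ℝ) / 2) * (2 * π) ^ ((d : ℝ) / 2)) *
      (S.det ^ (-(1 : ℝ) / 2) * B.det ^ (-(1 : ℝ) / 2)) * (exp (-(m ⬝ᵥ S⁻¹ *ᵥ m) / 2) *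
      exp (m ⬝ᵥ (S⁻¹ - (2 : ℝ) • (u * (1 + (2 : ℝ) • S * u)⁻¹)) *ᵥ m / 2)) := by ring
    _ = _ := by rw [hpow, one_mul]

theorem sum_outer_squares_gaussian_laplace_transform_general
    {Ω : Type*} [MeasurableSpace Ω] (P : Measure Ω)
    (d k : ℕ) (ξ : Fin k → Ω → (Fin d → ℝ)) (m : Fin k → (Fin d → ℝ))
    (S : Matrix (Fin d) (Fin d) ℝ) (hS : S.PosDef)
    (hmeas : ∀ j, Measurable (ξ j))
    (hindep : iIndepFun ξ P)
    (hlaw : ∀ j, P.map (ξ j) = mvGaussian (m j) S)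
    (u : Matrix (Fin d) (Fin d) ℝ) (hu : u.PosSemidef) :
    ∫ a, Real.exp (-(u * ∑ j, vecMulVec (ξ j a) (ξ j a)).trace) ∂P =
      (1 + ((2 : ℝ) • S) * u).det ^ (-(k : ℝ) / 2) *
        Real.exp (-(u * (1 + ((2 : ℝ) • S) * u)⁻¹ * ∑ j, vecMulVec (m j) (m j)).trace) := by
  have hφ : Continuous fun x : Fin d → ℝ => exp (-(x ⬝ᵥ u *ᵥ x)) := by fun_prop
  simp_rw [Matrix.mul_sum, trace_sum, trace_mul_vecMulVec, ← Finset.sum_neg_distrib, exp_sum]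
  rw [hindep.integral_fun_prod_comp (fun j => (hmeas j).aemeasurable)
    (fun _ => hφ.aestronglyMeasurable)]
  simp_rw [← integral_map (hmeas _).aemeasurable hφ.aestronglyMeasurable, hlaw,
    integral_exp_neg_dotProduct_mulVec_mvGaussian _ hS hu]
  rw [Finset.prod_mul_distrib, Finset.prod_const, Finset.card_fin, ← rpow_natCast,
    ← rpow_mul (hS.det_one_add_smul_mul_pos hu zero_le_two).le]
  congr 2
  ring

/-- If `ξ 1, …, ξ k` are independent `ℝ^d`-valued Gaussian random vectors with
mean vectors `m j` and common positive definite covariance matrix `S`,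
`Ξ = ∑ j, ξ j (ξ j)ᵀ`, `ω = ∑ j, m j (m j)ᵀ` and `σ = 2 S`, then for every positive
semidefinite `u`, `E[exp (-tr (u Ξ))] = det (I + σ u)^(-k/2) * exp (-tr (u (I + σ u)⁻¹ ω))`. -/
theorem sum_outer_squares_gaussian_laplace_transform
    {Ω : Type*} [MeasurableSpace Ω] (P : Measure Ω) [IsProbabilityMeasure P]
    (d k : ℕ) (ξ : Fin k → Ω → (Fin d → ℝ)) (m : Fin k → (Fin d → ℝ))
    (S : Matrix (Fin d) (Fin d) ℝ) (hS : S.PosDef)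
    (hmeas : ∀ j, Measurable (ξ j))
    (hindep : iIndepFun ξ P)
    (hlaw : ∀ j, P.map (ξ j) = mvGaussian (m j) S)
    (u : Matrix (Fin d) (Fin d) ℝ) (hu : u.PosSemidef) :
    ∫ a, Real.exp (-(u * ∑ j, vecMulVec (ξ j a) (ξ j a)).trace) ∂P =
      (1 + ((2 : ℝ) • S) * u).det ^ (-(k : ℝ) / 2) *
        Real.exp (-(u * (1 + ((2 : ℝ) • S) * u)⁻¹ * ∑ j, vecMulVec (m j) (m j)).trace) :=
  sum_outer_squares_gaussian_laplace_transform_general P d k ξ m S hS hmeas hindep hlaw u hu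
end

section
/- Let p ≥ 0 and let ω, σ be positive semidefinite real symmetric d×d matrices. Any probability measure μ on the space of real symmetric d×d matrices satisfying ∫ exp(-tr(u ξ)) dμ(ξ) = det(I + σu)^{-p} · exp(-tr(u (I + σu)^{-1} ω)) for all positive semidefinite u is supported on the cone of positive semidefinite matrices, i.e. μ assigns full mass to the positive semidefinite matrices. -/
open MeasureTheory Matrix

instance matrixMeasurableSpace (d : ℕ) : MeasurableSpace (Matrix (Fin d) (Fin d) ℝ) :=
  inferInstanceAs (MeasurableSpace (Fin d → Fin d → ℝ))

/-!
Fix `v` and test the Laplace transform at the positive semidefinite rank-one matrices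
`u = t • v vᵀ`, `t ≥ 0`. Then `det(I + σu) = 1 + t vᵀσv ≥ 1` and `u (I + σu)⁻¹ = u / (1 + t vᵀσv)`,
so the right-hand side lies in `(0, 1]`: the moment generating function of `ξ ↦ vᵀξv` is at most
`1` on `(-∞, 0]`, and a Chernoff bound with `t → ∞` forces `vᵀξv ≥ 0` almost surely. Taking the
countably many rational `v` and using continuity of the quadratic form, almost every symmetric
`ξ` is positive semidefinite.
-/

open Real ProbabilityTheory Filter

theorem ae_nonneg_of_mgf_le_one {Ω : Type*} [MeasurableSpace Ω] {μ : Measure Ω}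
    [IsFiniteMeasure μ] {X : Ω → ℝ}
    (h_int : ∀ t ≤ 0, Integrable (fun ω => exp (t * X ω)) μ) (h_mgf : ∀ t ≤ 0, mgf X μ t ≤ 1) :
    ∀ᵐ ω ∂μ, 0 ≤ X ω := by
  have h_null : ∀ ε > 0, μ {ω | X ω ≤ -ε} = 0 := by
    intro ε hε
    have h_chernoff : ∀ t ≤ 0, μ.real {ω | X ω ≤ -ε} ≤ exp (t * ε) := fun t ht =>
      calc μ.real {ω | X ω ≤ -ε} ≤ exp (-t * -ε) * mgf X μ t :=
            measure_le_le_exp_mul_mgf _ ht (h_int t ht)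
        _ ≤ exp (t * ε) := by
            rw [neg_mul_neg]
            exact mul_le_of_le_one_right (exp_pos _).le (h_mgf t ht)
    have h_lim : Tendsto (fun t => exp (t * ε)) atBot (nhds 0) :=
      tendsto_exp_atBot.comp (tendsto_id.atBot_mul_const hε)
    have h_real : μ.real {ω | X ω ≤ -ε} ≤ 0 :=
      ge_of_tendsto h_lim ((eventually_le_atBot 0).mono h_chernoff)
    exact (measureReal_eq_zero_iff).1 (le_antisymm h_real measureReal_nonneg)
  refine ae_iff.2 (measure_mono_null (fun ω hω => ?_) (measure_iUnion_null fun n : ℕ =>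
    h_null (1 / (n + 1)) Nat.one_div_pos_of_nat))
  obtain ⟨n, hn⟩ := exists_nat_one_div_lt (neg_pos.2 (not_le.1 hω))
  exact Set.mem_iUnion.2 ⟨n, (by linarith : X ω ≤ -(1 / ((n : ℝ) + 1)))⟩

namespace Matrix

variable {n : Type*} [Fintype n]

theorem trace_vecMulVec_mul {R : Type*} [CommSemiring R] (a b : n → R) (A : Matrix n n R) :
    (vecMulVec a b * A).trace = b ⬝ᵥ A *ᵥ a := by
  rw [vecMulVec_mul, trace_vecMulVec, dotProduct_comm, dotProduct_mulVec]

theorem det_one_add_vecMulVec {R : Type*} [CommRing R] [DecidableEq n] (a b : n → R) :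
    (1 + vecMulVec a b).det = 1 + b ⬝ᵥ a := by
  rw [vecMulVec_eq Unit, det_one_add_replicateCol_mul_replicateRow]

theorem mul_inv_eq_inv_smul_of_mul_eq_smul {K : Type*} [Field K] [DecidableEq n]
    {A B : Matrix n n K} {c : K} (hB : IsUnit B.det) (h : A * B = c • A) :
    A * B⁻¹ = c⁻¹ • A := by
  have hA : A = c • (A * B⁻¹) := by
    rw [← smul_mul, ← h, mul_nonsing_inv_cancel_right _ _ hB]
  rcases eq_or_ne c 0 with rfl | hc
  · rw [zero_smul] at hA
    rw [hA, zero_mul, smul_zero]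
  · conv_rhs => rw [hA, smul_smul, inv_mul_cancel₀ hc, one_smul]

theorem vecMulVec_mul_mul_vecMulVec {R : Type*} [CommSemiring R] (a b c d : n → R)
    (M : Matrix n n R) : vecMulVec a b * M * vecMulVec c d = (b ⬝ᵥ M *ᵥ c) • vecMulVec a d := by
  rw [vecMulVec_mul, vecMulVec_mul_vecMulVec, vecMulVec_smul, dotProduct_mulVec]

theorem posSemidef_of_isSymm_of_forall_rat {A : Matrix n n ℝ}
    (hA : A.IsSymm) (h : ∀ q : n → ℚ, 0 ≤ ((↑) ∘ q) ⬝ᵥ A *ᵥ ((↑) ∘ q)) : A.PosSemidef := by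
  refine .of_dotProduct_mulVec_nonneg (isHermitian_iff_isSymm.2 hA) fun x => ?_
  have h_closed : IsClosed {x : n → ℝ | 0 ≤ x ⬝ᵥ A *ᵥ x} :=
    isClosed_le continuous_const (by fun_prop)
  simpa using (DenseRange.piMap fun _ => Rat.denseRange_cast).induction_on x h_closed h

variable [DecidableEq n]

theorem det_one_add_mul_smul_vecMulVec (σ : Matrix n n ℝ) (t : ℝ) (v : n → ℝ) :
    (1 + σ * (t • vecMulVec v v)).det = 1 + t * (v ⬝ᵥ σ *ᵥ v) := by
  rw [Matrix.mul_smul, mul_vecMulVec, ← smul_vecMulVec, det_one_add_vecMulVec, dotProduct_smul,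
    smul_eq_mul]

theorem trace_smul_vecMulVec_mul_inv_mul (σ ω : Matrix n n ℝ) {t : ℝ} (v : n → ℝ)
    (h : 1 + t * (v ⬝ᵥ σ *ᵥ v) ≠ 0) :
    (t • vecMulVec v v * (1 + σ * (t • vecMulVec v v))⁻¹ * ω).trace
      = t * (v ⬝ᵥ ω *ᵥ v) / (1 + t * (v ⬝ᵥ σ *ᵥ v)) := by
  have h_mul : t • vecMulVec v v * (1 + σ * (t • vecMulVec v v))
      = (1 + t * (v ⬝ᵥ σ *ᵥ v)) • (t • vecMulVec v v) := by
    simp only [mul_add, mul_one, ← Matrix.mul_assoc, Matrix.mul_smul, Matrix.smul_mul,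
      vecMulVec_mul_mul_vecMulVec, smul_smul]
    module
  have h_det : IsUnit (1 + σ * (t • vecMulVec v v)).det := by
    rw [det_one_add_mul_smul_vecMulVec]; exact h.isUnit
  rw [mul_inv_eq_inv_smul_of_mul_eq_smul h_det h_mul, smul_mul, trace_smul, smul_mul,
    trace_smul, trace_vecMulVec_mul, smul_eq_mul, smul_eq_mul, div_eq_inv_mul]

end Matrix

section Wishart

variable {n : Type*} [Fintype n] [DecidableEq n]

noncomputable def wishartLaplace (p : ℝ) (ω σ u : Matrix n n ℝ) : ℝ :=
  (1 + σ * u).det ^ (-p) * exp (-(u * (1 + σ * u)⁻¹ * ω).trace)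

theorem wishartLaplace_smul_vecMulVec_mem_Ioc {p : ℝ} (hp : 0 ≤ p) {ω σ : Matrix n n ℝ}
    (hω : ω.PosSemidef) (hσ : σ.PosSemidef) {t : ℝ} (ht : 0 ≤ t) (v : n → ℝ) :
    wishartLaplace p ω σ (t • vecMulVec v v) ∈ Set.Ioc 0 1 := by
  have hσv : 0 ≤ v ⬝ᵥ σ *ᵥ v := by simpa using hσ.dotProduct_mulVec_nonneg v
  have hωv : 0 ≤ v ⬝ᵥ ω *ᵥ v := by simpa using hω.dotProduct_mulVec_nonneg v
  have h_det : 1 ≤ 1 + t * (v ⬝ᵥ σ *ᵥ v) := le_add_of_nonneg_right (mul_nonneg ht hσv)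
  rw [wishartLaplace, det_one_add_mul_smul_vecMulVec,
    trace_smul_vecMulVec_mul_inv_mul σ ω v (by positivity)]
  refine ⟨by positivity, mul_le_one₀ (rpow_le_one_of_one_le_of_nonpos h_det (by linarith))
    (exp_pos _).le (exp_le_one_iff.2 ?_)⟩
  rw [neg_nonpos]
  positivity

theorem ae_quadForm_nonneg_of_laplace_eq_wishartLaplace [MeasurableSpace (Matrix n n ℝ)]
    {p : ℝ} (hp : 0 ≤ p) {ω σ : Matrix n n ℝ} (hω : ω.PosSemidef) (hσ : σ.PosSemidef)
    {μ : Measure (Matrix n n ℝ)} [IsFiniteMeasure μ]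
    (hlaplace : ∀ u : Matrix n n ℝ, u.PosSemidef →
      ∫ ξ, exp (-(u * ξ).trace) ∂μ = wishartLaplace p ω σ u) (v : n → ℝ) :
    ∀ᵐ ξ ∂μ, 0 ≤ v ⬝ᵥ ξ *ᵥ v := by
  have h_mgf : ∀ t ≤ 0, mgf (fun ξ => v ⬝ᵥ ξ *ᵥ v) μ t
      = wishartLaplace p ω σ ((-t) • vecMulVec v v) := fun t ht => by
    have h_psd : ((-t) • vecMulVec v v).PosSemidef := by
      simpa using (posSemidef_vecMulVec_self_star v).smul (neg_nonneg.2 ht)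
    rw [← hlaplace _ h_psd, mgf]
    simp only [smul_mul, trace_smul, trace_vecMulVec_mul, smul_eq_mul, neg_mul, neg_neg]
  have h_mem : ∀ t ≤ 0, mgf (fun ξ => v ⬝ᵥ ξ *ᵥ v) μ t ∈ Set.Ioc 0 1 := fun t ht => by
    rw [h_mgf t ht]
    exact wishartLaplace_smul_vecMulVec_mem_Ioc hp hω hσ (neg_nonneg.2 ht) v
  exact ae_nonneg_of_mgf_le_one
    (fun t ht => Integrable.of_integral_ne_zero (h_mem t ht).1.ne') fun t ht => (h_mem t ht).2

end Wishart

/-- Any probability measure on the real symmetric `d×d` matrices whose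
Laplace transform is that of the Wishart distribution `Γ(p, ω; σ)` gives full mass to the
cone of positive semidefinite matrices. -/
theorem wishart_supported_on_posSemidef {d : ℕ} (p : ℝ) (hp : 0 ≤ p)
    (ω σ : Matrix (Fin d) (Fin d) ℝ) (hω : ω.PosSemidef) (hσ : σ.PosSemidef)
    (μ : Measure (Matrix (Fin d) (Fin d) ℝ)) [IsProbabilityMeasure μ]
    (hsymm : μ {A | A.IsSymm} = 1)
    (hlaplace : ∀ u : Matrix (Fin d) (Fin d) ℝ, u.PosSemidef →
      ∫ ξ, Real.exp (-(u * ξ).trace) ∂μ =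
        (1 + σ * u).det ^ (-p) * Real.exp (-(u * (1 + σ * u)⁻¹ * ω).trace)) :
    μ {A | A.PosSemidef} = 1 := by
  have h_ae : ∀ᵐ ξ ∂μ, ∀ q : Fin d → ℚ, 0 ≤ ((↑) ∘ q) ⬝ᵥ ξ *ᵥ ((↑) ∘ q) :=
    ae_all_iff.2 fun q => ae_quadForm_nonneg_of_laplace_eq_wishartLaplace hp hω hσ hlaplace _
  refine le_antisymm prob_le_one ?_
  calc 1 = μ ({A | A.IsSymm} ∩ {A | ∀ q : Fin d → ℚ, 0 ≤ ((↑) ∘ q) ⬝ᵥ A *ᵥ ((↑) ∘ q)}) := by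
        rw [measure_inter_conull h_ae, hsymm]
    _ ≤ μ {A | A.PosSemidef} :=
        measure_mono fun A hA => posSemidef_of_isSymm_of_forall_rat hA.1 hA.2
end

section
/- Let p ≥ 0 and ω be a positive semidefinite real symmetric d×d matrix, and let X be a random variable with values in the real symmetric d×d matrices such that E[exp(-tr(u X))] = det(I + u)^{-p} · exp(-tr(u (I + u)^{-1} ω)) for all positive semidefinite u. Let q be positive semidefinite with σ := q². Then the random variable q X q satisfies E[exp(-tr(u · qXq))] = det(I + σu)^{-p} · exp(-tr(u (I + σu)^{-1} qωq)) for all positive semidefinite u; that is, q X q is distributed according to Γ(p, qωq; σ). -/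
/-!
Since `tr (u (q X q)) = tr ((q u q) X)` and `q u q` is positive semidefinite, the Laplace
transform of `q X q` at `u` is that of `X` at `q u q`. The two resulting factors are
rewritten in terms of `σ = q²` by the Weinstein–Aronszajn identity
`det (1 + q (q u)) = det (1 + (q u) q)` and the push-through identity
`(1 + q (q u))⁻¹ q = q (1 + (q u) q)⁻¹`.
-/

open MeasureTheory Matrix

namespace Matrix

variable {m n R : Type*} [Fintype m] [Fintype n]

theorem trace_mul_mul_mul_comm [NonUnitalCommSemiring R] (u : Matrix m m R)
    (a : Matrix m n R) (x : Matrix n n R) (b : Matrix n m R) :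
    (u * (a * x * b)).trace = (b * u * a * x).trace := by
  rw [← Matrix.mul_assoc, trace_mul_comm, Matrix.mul_assoc, Matrix.mul_assoc]

variable [DecidableEq m] [DecidableEq n] [CommRing R]

/-- `1 + a * b` and `1 + b * a` have the same determinant, so when they are singular both
inverses are the junk value `0` and the identity still holds. -/
theorem inv_one_add_mul_mul_eq_mul_inv_one_add_mul (a : Matrix m n R) (b : Matrix n m R) :
    (1 + a * b)⁻¹ * a = a * (1 + b * a)⁻¹ := by
  by_cases h : IsUnit (1 + a * b).det
  · have h' : IsUnit (1 + b * a).det := det_one_add_mul_comm a b ▸ h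
    have := invertibleOfIsUnitDet _ h
    have := invertibleOfIsUnitDet _ h'
    have hcomm : (1 + a * b) * a = a * (1 + b * a) := by
      rw [Matrix.add_mul, Matrix.mul_add, Matrix.one_mul, Matrix.mul_one, Matrix.mul_assoc]
    rw [inv_mul_eq_iff_eq_mul_of_invertible, ← Matrix.mul_assoc, hcomm,
      mul_inv_cancel_right_of_invertible]
  · have h' : ¬IsUnit (1 + b * a).det := det_one_add_mul_comm a b ▸ h
    rw [nonsing_inv_apply_not_isUnit _ h, nonsing_inv_apply_not_isUnit _ h',
      Matrix.zero_mul, Matrix.mul_zero]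

theorem trace_mul_inv_one_add_mul_mul_conj (u ω q : Matrix n n R) :
    (u * (1 + q * q * u)⁻¹ * (q * ω * q)).trace =
      (q * u * q * (1 + q * u * q)⁻¹ * ω).trace := by
  have push : q * (u * (1 + q * q * u)⁻¹) * q = q * u * q * (1 + q * u * q)⁻¹ := by
    simp only [Matrix.mul_assoc]
    rw [inv_one_add_mul_mul_eq_mul_inv_one_add_mul q (q * u)]
    simp only [Matrix.mul_assoc]
  rw [trace_mul_mul_mul_comm, push]

end Matrix

theorem wishart_quadratic_transformation_general
    {Ω : Type*} [MeasurableSpace Ω] (P : Measure Ω)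
    {d : ℕ} (p : ℝ) (ω : Matrix (Fin d) (Fin d) ℝ)
    (X : Ω → Matrix (Fin d) (Fin d) ℝ)
    (hlaplace : ∀ u : Matrix (Fin d) (Fin d) ℝ, u.PosSemidef →
      ∫ a, Real.exp (-(u * X a).trace) ∂P =
        (1 + u).det ^ (-p) * Real.exp (-(u * (1 + u)⁻¹ * ω).trace))
    (q : Matrix (Fin d) (Fin d) ℝ) (hq : q.PosSemidef)
    (u : Matrix (Fin d) (Fin d) ℝ) (hu : u.PosSemidef) :
    ∫ a, Real.exp (-(u * (q * X a * q)).trace) ∂P =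
      (1 + (q * q) * u).det ^ (-p) *
        Real.exp (-(u * (1 + (q * q) * u)⁻¹ * (q * ω * q)).trace) := by
  have hquq : (q * u * q).PosSemidef := by
    simpa only [hq.isHermitian.eq] using hu.conjTranspose_mul_mul_same q
  have hdet : (1 + q * q * u).det = (1 + q * u * q).det := by
    rw [Matrix.mul_assoc, det_one_add_mul_comm, Matrix.mul_assoc]
  simp only [trace_mul_mul_mul_comm u q]
  rw [hlaplace _ hquq, hdet, trace_mul_inv_one_add_mul_mul_conj]

/-- If `X` is a random symmetric matrix with the Laplace transform of
`Γ(p, ω; I)` and `q` is positive semidefinite with `σ = q²`, then `q X q` has the Laplace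
transform of `Γ(p, q ω q; σ)`. -/
theorem wishart_quadratic_transformation
    {Ω : Type*} [MeasurableSpace Ω] (P : Measure Ω) [IsProbabilityMeasure P]
    {d : ℕ} (p : ℝ) (hp : 0 ≤ p) (ω : Matrix (Fin d) (Fin d) ℝ) (hω : ω.PosSemidef)
    (X : Ω → Matrix (Fin d) (Fin d) ℝ) (hXsymm : ∀ a, (X a).IsSymm)
    (hlaplace : ∀ u : Matrix (Fin d) (Fin d) ℝ, u.PosSemidef →
      ∫ a, Real.exp (-(u * X a).trace) ∂P =
        (1 + u).det ^ (-p) * Real.exp (-(u * (1 + u)⁻¹ * ω).trace))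
    (q : Matrix (Fin d) (Fin d) ℝ) (hq : q.PosSemidef)
    (u : Matrix (Fin d) (Fin d) ℝ) (hu : u.PosSemidef) :
    ∫ a, Real.exp (-(u * (q * X a * q)).trace) ∂P =
      (1 + (q * q) * u).det ^ (-p) *
        Real.exp (-(u * (1 + (q * q) * u)⁻¹ * (q * ω * q)).trace) :=
  wishart_quadratic_transformation_general P p ω X hlaplace q hq u hu
end
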